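/- arXiv:1101.2908 — 3 statements merged into one kernel-verified Lean document; each statement's English description precedes it below -/
import Mathlib

section
/- With constant symmetric noise matrix N satisfying N₁₁ + N₂₂ ≠ 0, the solution of the Hopf Lyapunov equation satisfies, as y → 0⁻: v₁₁ ~ -(N₁₁+N₂₂)/(4y), v₂₂ ~ -(N₁₁+N₂₂)/(4y) (both tending to +∞ if N₁₁+N₂₂ > 0), while v₁₂ → (N₁₁ - N₂₂)/4. In particular, if N₁₁ = N₂₂ and N₁₂ = 0 then v₁₂(y) → 0 as y → 0⁻. -/
open Filter Topology Asymptotics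

lemma hopf_aux_equiv (a b S : ℝ) (hS : S ≠ 0) :
    (fun y => -(2 * a * y ^ 2 + 2 * b * y + S) / (4 * y * (y ^ 2 + 1)))
      ~[nhdsWithin (0:ℝ) (Set.Iio 0)] (fun y => -S / (4 * y)) := by
  have hne : ∀ᶠ y in nhdsWithin (0:ℝ) (Set.Iio 0), -S / (4 * y) ≠ 0 := by
    filter_upwards [self_mem_nhdsWithin] with y (hy : y < 0)
    exact div_ne_zero (neg_ne_zero.2 hS) (by nlinarith)
  rw [Asymptotics.isEquivalent_iff_tendsto_one hne]
  have hg : ContinuousAt (fun y : ℝ => (2 * a * y ^ 2 + 2 * b * y + S) / (S * (y ^ 2 + 1))) 0 := by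
    apply ContinuousAt.div
    · fun_prop
    · fun_prop
    · simp [hS]
  have h1 : Tendsto (fun y : ℝ => (2 * a * y ^ 2 + 2 * b * y + S) / (S * (y ^ 2 + 1)))
      (nhdsWithin 0 (Set.Iio 0)) (𝓝 1) := by
    have := hg.tendsto
    simp only [mul_zero, zero_pow, ne_eq, OfNat.ofNat_ne_zero, not_false_eq_true, zero_add,
      mul_one] at this
    rw [div_self hS] at this
    exact this.mono_left nhdsWithin_le_nhds
  refine h1.congr' ?_
  filter_upwards [self_mem_nhdsWithin] with y (hy : y < 0)
  have hy0 : y ≠ 0 := ne_of_lt hy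
  have hy1 : y ^ 2 + 1 ≠ 0 := by positivity
  simp only [Pi.div_apply]
  field_simp

lemma hopf_aux_atTop (S : ℝ) (hS : 0 < S) :
    Tendsto (fun y : ℝ => -S / (4 * y)) (nhdsWithin 0 (Set.Iio 0)) atTop := by
  have h1 : Tendsto (fun y : ℝ => -y) (nhdsWithin 0 (Set.Iio 0)) (nhdsWithin 0 (Set.Ioi 0)) := by
    refine tendsto_nhdsWithin_of_tendsto_nhds_of_eventually_within _ (by
      simpa using (continuous_neg.tendsto (0:ℝ)).mono_left nhdsWithin_le_nhds) ?_
    filter_upwards [self_mem_nhdsWithin] with y (hy : y < 0)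
    simpa using hy
  have h2 : Tendsto (fun y : ℝ => (-y)⁻¹) (nhdsWithin 0 (Set.Iio 0)) atTop :=
    tendsto_inv_nhdsGT_zero.comp h1
  have h3 : Tendsto (fun y : ℝ => (S / 4) * (-y)⁻¹) (nhdsWithin 0 (Set.Iio 0)) atTop :=
    h2.const_mul_atTop (by positivity)
  refine h3.congr' ?_
  filter_upwards [self_mem_nhdsWithin] with y (hy : y < 0)
  have hy0 : y ≠ 0 := ne_of_lt hy
  field_simp
/-- Asymptotics of the entries of the solution of the Hopf Lyapunov equation with constant
symmetric noise matrix `N`, `N₁₁ + N₂₂ ≠ 0`, as `y → 0⁻`: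
`v₁₁ ~ -(N₁₁+N₂₂)/(4y)`, `v₂₂ ~ -(N₁₁+N₂₂)/(4y)` (both tending to `+∞` when
`N₁₁ + N₂₂ > 0`), while `v₁₂ → (N₁₁ - N₂₂)/4`; in particular `v₁₂ → 0` if
`N₁₁ = N₂₂` and `N₁₂ = 0`. -/
theorem hopf_covariance_asymptotics (N₁₁ N₁₂ N₂₂ : ℝ) (hN : N₁₁ + N₂₂ ≠ 0)
    (v₁₁ v₁₂ v₂₂ : ℝ → ℝ)
    (h11 : ∀ y, v₁₁ y = -(2 * N₁₁ * y ^ 2 + 2 * N₁₂ * y + N₁₁ + N₂₂) / (4 * y * (y ^ 2 + 1)))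
    (h22 : ∀ y, v₂₂ y = -(2 * N₂₂ * y ^ 2 - 2 * N₁₂ * y + N₁₁ + N₂₂) / (4 * y * (y ^ 2 + 1)))
    (h12 : ∀ y, v₁₂ y = (N₁₁ - N₂₂ - 2 * N₁₂ * y) / (4 * (y ^ 2 + 1))) :
    v₁₁ ~[nhdsWithin 0 (Set.Iio 0)] (fun y => -(N₁₁ + N₂₂) / (4 * y)) ∧
    v₂₂ ~[nhdsWithin 0 (Set.Iio 0)] (fun y => -(N₁₁ + N₂₂) / (4 * y)) ∧
    (0 < N₁₁ + N₂₂ →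
      Tendsto v₁₁ (nhdsWithin 0 (Set.Iio 0)) atTop ∧
      Tendsto v₂₂ (nhdsWithin 0 (Set.Iio 0)) atTop) ∧
    Tendsto v₁₂ (nhdsWithin 0 (Set.Iio 0)) (𝓝 ((N₁₁ - N₂₂) / 4)) ∧
    (N₁₁ = N₂₂ → N₁₂ = 0 → Tendsto v₁₂ (nhdsWithin 0 (Set.Iio 0)) (𝓝 0)) := by
  have e11 : v₁₁ = fun y => -(2 * N₁₁ * y ^ 2 + 2 * N₁₂ * y + (N₁₁ + N₂₂)) / (4 * y * (y ^ 2 + 1)) := by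
    funext y; rw [h11]; ring_nf
  have e22 : v₂₂ = fun y => -(2 * N₂₂ * y ^ 2 + 2 * (-N₁₂) * y + (N₁₁ + N₂₂)) / (4 * y * (y ^ 2 + 1)) := by
    funext y; rw [h22]; ring_nf
  have H11 : v₁₁ ~[nhdsWithin 0 (Set.Iio 0)] (fun y => -(N₁₁ + N₂₂) / (4 * y)) := by
    rw [e11]; exact hopf_aux_equiv N₁₁ N₁₂ (N₁₁ + N₂₂) hN
  have H22 : v₂₂ ~[nhdsWithin 0 (Set.Iio 0)] (fun y => -(N₁₁ + N₂₂) / (4 * y)) := by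
    rw [e22]; exact hopf_aux_equiv N₂₂ (-N₁₂) (N₁₁ + N₂₂) hN
  have H12 : Tendsto v₁₂ (nhdsWithin 0 (Set.Iio 0)) (𝓝 ((N₁₁ - N₂₂) / 4)) := by
    have hg : ContinuousAt (fun y : ℝ => (N₁₁ - N₂₂ - 2 * N₁₂ * y) / (4 * (y ^ 2 + 1))) 0 := by
      apply ContinuousAt.div
      · fun_prop
      · fun_prop
      · norm_num
    have := hg.tendsto.mono_left (nhdsWithin_le_nhds (s := Set.Iio 0))
    have h0 : (N₁₁ - N₂₂ - 2 * N₁₂ * 0) / (4 * ((0:ℝ) ^ 2 + 1)) = (N₁₁ - N₂₂) / 4 := by norm_num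
    rw [h0] at this
    refine this.congr fun y => (h12 y).symm
  refine ⟨H11, H22, fun hS => ⟨(H11.symm).tendsto_atTop (hopf_aux_atTop _ hS),
    (H22.symm).tendsto_atTop (hopf_aux_atTop _ hS)⟩, H12, fun h1 h2 => ?_⟩
  simpa [h1] using H12
end

section
/- Let A₀ = [[0, 1],[-2√(-y₁), k√(-y₁)]] with y₁ < 0 and k < 0 (so that A₀ is Hurwitz), and let N be a constant symmetric 2×2 matrix. Then the unique symmetric solution X = [[v₁₁,v₁₂],[v₁₂,v₂₂]] of A₀X + XA₀ᵀ + N = 0 satisfies v₁₂ = -N₁₁/2; moreover, if N₂₂ ≠ 0, then v₁₁(y₁) = Θ(1/(-y₁)) and v₂₂(y₁) = Θ(1/√(-y₁)) as y₁ → 0⁻. -/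
/-!
Writing `s = √(-y₁)`, the Lyapunov equation for `A₀ = [[0, 1], [-2s, ks]]` consists of three linear
equations in the entries of `X`. The top-left one forces `v₁₂ = -N₁₁/2`; the other two express
`s · v₂₂` and `s² · v₁₁` as polynomials in `s` with constant terms `-N₂₂/(2k)` and `-N₂₂/(4k)`.
Since `s → 0` as `y₁ → 0⁻`, these polynomials stay bounded away from `0` and `∞`, which gives the
orders `1/s` and `1/s² = 1/(-y₁)`.
-/

open Matrix Filter Topology

/-- `f = Θ(g)` (in absolute value) as `y → 0⁻`. -/
def IsThetaNearZeroMinus (f g : ℝ → ℝ) : Prop :=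
  ∃ c C : ℝ, 0 < c ∧ 0 < C ∧
    ∀ᶠ y in nhdsWithin 0 (Set.Iio 0), c * g y ≤ |f y| ∧ |f y| ≤ C * g y

lemma lyapunov_companion_entries {p q a b c n₁₁ n₁₂ n₂₂ : ℝ}
    (h : !![0, 1; p, q] * !![a, b; b, c] + !![a, b; b, c] * (!![0, 1; p, q])ᵀ +
      !![n₁₁, n₁₂; n₁₂, n₂₂] = 0) :
    2 * b + n₁₁ = 0 ∧ c + p * a + q * b + n₁₂ = 0 ∧ 2 * (p * b + q * c) + n₂₂ = 0 := by
  have h₀₀ := congr($h 0 0)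
  have h₀₁ := congr($h 0 1)
  have h₁₁ := congr($h 1 1)
  simp only [Matrix.add_apply, mul_apply, Fin.sum_univ_two, transpose_apply, of_apply, cons_val',
    cons_val_zero, cons_val_one, cons_val_fin_one, Matrix.zero_apply] at h₀₀ h₀₁ h₁₁
  exact ⟨by linarith, by linarith, by linarith⟩

lemma lyapunov_bogdanovTakens_solution {k s a b c n₁₁ n₁₂ n₂₂ : ℝ} (hk : k ≠ 0) (hs : s ≠ 0)
    (h : !![0, 1; -2 * s, k * s] * !![a, b; b, c] + !![a, b; b, c] * (!![0, 1; -2 * s, k * s])ᵀ +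
      !![n₁₁, n₁₂; n₁₂, n₂₂] = 0) :
    b = -n₁₁ / 2 ∧
    c = (-n₂₂ / (2 * k) - n₁₁ / k * s) * (1 / s) ∧
    a = (-n₂₂ / (4 * k) + (n₁₂ / 2 - n₁₁ / (2 * k)) * s - k * n₁₁ / 4 * s ^ 2) * (1 / s ^ 2) := by
  obtain ⟨h₀₀, h₀₁, h₁₁⟩ := lyapunov_companion_entries h
  have hb : b = -n₁₁ / 2 := by linarith
  subst hb
  refine ⟨rfl, ?_, ?_⟩
  · field_simp
    linear_combination h₁₁
  · field_simp
    linear_combination (-4 * k * s) * h₀₁ + 2 * h₁₁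

lemma isThetaNearZeroMinus_of_eventuallyEq_mul {f g h : ℝ → ℝ} {α : ℝ} (hα : α ≠ 0)
    (hh : Tendsto h (𝓝[<] 0) (𝓝 α)) (hg : ∀ᶠ y in 𝓝[<] 0, 0 ≤ g y)
    (hf : ∀ᶠ y in 𝓝[<] 0, f y = h y * g y) :
    IsThetaNearZeroMinus f g := by
  have hα' : 0 < |α| := abs_pos.mpr hα
  have hlow : ∀ᶠ y in 𝓝[<] 0, |α| / 2 < |h y| :=
    hh.abs.eventually (lt_mem_nhds (by linarith))
  have hhigh : ∀ᶠ y in 𝓝[<] 0, |h y| < 2 * |α| :=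
    hh.abs.eventually (gt_mem_nhds (by linarith))
  refine ⟨|α| / 2, 2 * |α|, by positivity, by positivity, ?_⟩
  filter_upwards [hg, hf, hlow, hhigh] with y hgy hfy hlowy hhighy
  rw [hfy, abs_mul, abs_of_nonneg hgy]
  exact ⟨by gcongr, by gcongr⟩

lemma isThetaNearZeroMinus_of_eq_comp_sqrt_mul {f g P : ℝ → ℝ} (hP : Continuous P) (hP₀ : P 0 ≠ 0)
    (hg : ∀ y < 0, 0 ≤ g y) (hf : ∀ y < 0, f y = P (Real.sqrt (-y)) * g y) :
    IsThetaNearZeroMinus f g :=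
  isThetaNearZeroMinus_of_eventuallyEq_mul hP₀
    (tendsto_nhdsWithin_of_tendsto_nhds
      ((hP.comp (by fun_prop : Continuous fun y : ℝ => Real.sqrt (-y))).tendsto' 0 _ (by simp)))
    (eventually_nhdsWithin_of_forall hg) (eventually_nhdsWithin_of_forall hf)

/-- For `A₀(y₁) = [[0,1],[-2√(-y₁), k√(-y₁)]]` with `y₁ < 0`, `k < 0` (Hurwitz), and
constant symmetric noise matrix `N`, any symmetric solution `X` of
`A₀X + XA₀ᵀ + N = 0` has off-diagonal entry `v₁₂ = -N₁₁/2`; moreover if `N₂₂ ≠ 0`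
then `v₁₁(y₁) = Θ(1/(-y₁))` and `v₂₂(y₁) = Θ(1/√(-y₁))` as `y₁ → 0⁻`. -/
theorem bogdanov_takens_covariance_scaling (k N₁₁ N₁₂ N₂₂ : ℝ) (hk : k < 0)
    (V₁₁ V₁₂ V₂₂ : ℝ → ℝ)
    (hsol : ∀ y₁ : ℝ, y₁ < 0 →
      (!![0, 1; -2 * Real.sqrt (-y₁), k * Real.sqrt (-y₁)] : Matrix (Fin 2) (Fin 2) ℝ) *
          !![V₁₁ y₁, V₁₂ y₁; V₁₂ y₁, V₂₂ y₁] +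
        !![V₁₁ y₁, V₁₂ y₁; V₁₂ y₁, V₂₂ y₁] *
          (!![0, 1; -2 * Real.sqrt (-y₁), k * Real.sqrt (-y₁)] : Matrix (Fin 2) (Fin 2) ℝ)ᵀ +
        !![N₁₁, N₁₂; N₁₂, N₂₂] = 0) :
    (∀ y₁ : ℝ, y₁ < 0 → V₁₂ y₁ = -N₁₁ / 2) ∧
    (N₂₂ ≠ 0 →
      IsThetaNearZeroMinus V₁₁ (fun y₁ => 1 / (-y₁)) ∧
      IsThetaNearZeroMinus V₂₂ (fun y₁ => 1 / Real.sqrt (-y₁))) := by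
  have solution (y : ℝ) (hy : y < 0) :=
    lyapunov_bogdanovTakens_solution hk.ne (Real.sqrt_pos.mpr (neg_pos.mpr hy)).ne' (hsol y hy)
  refine ⟨fun y hy => (solution y hy).1, fun hN => ⟨?_, ?_⟩⟩
  · refine isThetaNearZeroMinus_of_eq_comp_sqrt_mul
      (P := fun s => -N₂₂ / (4 * k) + (N₁₂ / 2 - N₁₁ / (2 * k)) * s - k * N₁₁ / 4 * s ^ 2)
      (by fun_prop) (by simp [hN, hk.ne])
      (fun y hy => one_div_nonneg.mpr (neg_nonneg.mpr hy.le)) (fun y hy => ?_)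
    rw [(solution y hy).2.2, Real.sq_sqrt (neg_nonneg.mpr hy.le)]
  · exact isThetaNearZeroMinus_of_eq_comp_sqrt_mul (P := fun s => -N₂₂ / (2 * k) - N₁₁ / k * s)
      (by fun_prop) (by simp [hN, hk.ne]) (fun y _ => by positivity)
      (fun y hy => (solution y hy).2.1)
end

section
/- Let y₀ < 0, κ > 0, and suppose s ∈ [0, s*) with -s - y₀ = C ε^{2α} for some constants C > 0 and 0 ≤ α < 1/3. Define φ(r) = (2κ/3)[(-s - y₀)^{3/2} - (-r - y₀)^{3/2}] for r ∈ [0,s]. Then φ'(r) > 0 on [0,s], φ(s) = 0, and ∫₀^s e^{φ(r)/ε} dr ~ ε/(κ(-s - y₀)^{1/2}) = Θ(ε^{1-α}) as ε → 0⁺. -/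
/-!
Write `a = -s - y₀` and `u = s - r`, so that the phase is `(2κ/3)(a^{3/2} - (a + u)^{3/2})`. The
mean-value bounds `(3/2)√a·u ≤ (a + u)^{3/2} - a^{3/2} ≤ (3/2)√(a + u)·u` squeeze it between linear
phases in `r - s`. Slope `κ√a` on all of `[0, s]` bounds the integral by `ε/(κ√a)`; slope
`κ√(a(1 + δ))` on the last stretch `[s - δa, s]` bounds it below by
`(1 - exp(-κδ a^{3/2}/ε))/√(1 + δ) · ε/(κ√a)`. Since `a^{3/2}/ε = C^{3/2} ε^{3α-1} → ∞` for
`α < 1/3`, the choice `δ = (a^{3/2}/ε)^{-1/2}` sends this lower factor to `1`.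
-/

open Filter Topology Asymptotics intervalIntegral Real

lemma rpow_three_halves_eq_mul_sqrt {x : ℝ} (hx : 0 ≤ x) : x ^ ((3 : ℝ) / 2) = x * √x := by
  rw [sqrt_eq_rpow, show (3 : ℝ) / 2 = 1 + 1 / 2 by norm_num, rpow_add' hx (by norm_num),
    rpow_one]

lemma three_halves_mul_sqrt_mul_sub_le_rpow_sub_rpow {a b : ℝ} (ha : 0 ≤ a) (hab : a ≤ b) :
    3 / 2 * √a * (b - a) ≤ b ^ ((3 : ℝ) / 2) - a ^ ((3 : ℝ) / 2) := by
  rw [rpow_three_halves_eq_mul_sqrt ha, rpow_three_halves_eq_mul_sqrt (ha.trans hab)]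
  have h : 0 ≤ (√b - √a) ^ 2 * (√b + √a / 2) := by positivity
  linear_combination h + (√b - 3 / 2 * √a) * sq_sqrt (ha.trans hab) + √a / 2 * sq_sqrt ha

lemma rpow_sub_rpow_le_three_halves_mul_sqrt_mul_sub {a b : ℝ} (ha : 0 ≤ a) (hab : a ≤ b) :
    b ^ ((3 : ℝ) / 2) - a ^ ((3 : ℝ) / 2) ≤ 3 / 2 * √b * (b - a) := by
  rw [rpow_three_halves_eq_mul_sqrt ha, rpow_three_halves_eq_mul_sqrt (ha.trans hab)]
  have h : 0 ≤ (√b - √a) ^ 2 * (√b + 2 * √a) := by positivity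
  linear_combination h / 2 + √b / 2 * sq_sqrt (ha.trans hab) - (3 / 2 * √b - √a) * sq_sqrt ha

lemma integral_exp_mul_sub {c : ℝ} (hc : c ≠ 0) (p q : ℝ) :
    ∫ r in p..q, exp (c * (r - q)) = (1 - exp (-(c * (q - p)))) / c := by
  simp_rw [mul_sub]
  rw [integral_comp_mul_sub (f := exp) hc, integral_exp, sub_self, exp_zero, smul_eq_mul,
    inv_mul_eq_div, neg_sub]

lemma Asymptotics.IsEquivalent.eventually_mul_le {α : Type*} {l : Filter α} {u v : α → ℝ}
    (h : u ~[l] v) (hv : ∀ᶠ x in l, 0 ≤ v x) {c : ℝ} (hc : c < 1) :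
    ∀ᶠ x in l, c * v x ≤ u x := by
  obtain ⟨φ, hφ, h_eq⟩ := h.exists_eq_mul
  filter_upwards [hφ.eventually_const_lt hc, hv, h_eq] with x hφx hvx hx
  rw [hx, Pi.mul_apply]
  exact mul_le_mul_of_nonneg_right hφx.le hvx

noncomputable def foldPhase (κ y₀ s r : ℝ) : ℝ :=
  2 * κ / 3 * ((-s - y₀) ^ ((3 : ℝ) / 2) - (-r - y₀) ^ ((3 : ℝ) / 2))

section foldPhase

variable {κ y₀ s r ε : ℝ}

@[simp]
lemma foldPhase_self : foldPhase κ y₀ s s = 0 := by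
  simp [foldPhase]

lemma continuous_foldPhase : Continuous (foldPhase κ y₀ s) := by
  unfold foldPhase
  fun_prop (disch := norm_num)

lemma hasDerivAt_foldPhase (hr : 0 < -r - y₀) :
    HasDerivAt (foldPhase κ y₀ s) (κ * √(-r - y₀)) r := by
  have h : HasDerivAt (fun x : ℝ => -x - y₀) (-1) r := (hasDerivAt_neg r).sub_const y₀
  refine ((h.rpow_const (p := (3 : ℝ) / 2) (Or.inl hr.ne')).const_sub
    ((-s - y₀) ^ ((3 : ℝ) / 2)) |>.const_mul (2 * κ / 3)).congr_deriv ?_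
  rw [sqrt_eq_rpow]
  norm_num
  ring

lemma deriv_foldPhase_pos (hκ : 0 < κ) (hr : 0 < -r - y₀) : 0 < deriv (foldPhase κ y₀ s) r := by
  rw [(hasDerivAt_foldPhase hr).deriv]
  exact mul_pos hκ (sqrt_pos.2 hr)

lemma foldPhase_le (hκ : 0 ≤ κ) (ha : 0 ≤ -s - y₀) (hrs : r ≤ s) :
    foldPhase κ y₀ s r ≤ κ * √(-s - y₀) * (r - s) := by
  have := three_halves_mul_sqrt_mul_sub_le_rpow_sub_rpow ha (by linarith : -s - y₀ ≤ -r - y₀)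
  unfold foldPhase
  nlinarith

lemma le_foldPhase (hκ : 0 ≤ κ) (ha : 0 ≤ -s - y₀) (hrs : r ≤ s) :
    κ * √(-r - y₀) * (r - s) ≤ foldPhase κ y₀ s r := by
  have := rpow_sub_rpow_le_three_halves_mul_sqrt_mul_sub ha (by linarith : -s - y₀ ≤ -r - y₀)
  unfold foldPhase
  nlinarith

lemma intervalIntegrable_exp_foldPhase_div (a b : ℝ) :
    IntervalIntegrable (fun r => exp (foldPhase κ y₀ s r / ε)) MeasureTheory.volume a b :=
  (continuous_foldPhase.div_const ε).rexp.intervalIntegrable a b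

lemma integral_exp_foldPhase_le (hκ : 0 < κ) (hε : 0 < ε) (ha : 0 < -s - y₀) (hs : 0 ≤ s) :
    ∫ r in 0..s, exp (foldPhase κ y₀ s r / ε) ≤ ε / (κ * √(-s - y₀)) := by
  set c := κ * √(-s - y₀) / ε
  have hc : 0 < c := by positivity
  calc ∫ r in 0..s, exp (foldPhase κ y₀ s r / ε)
      ≤ ∫ r in 0..s, exp (c * (r - s)) := by
        refine integral_mono_on hs (intervalIntegrable_exp_foldPhase_div _ _)
          ((by fun_prop : Continuous fun r => exp (c * (r - s))).intervalIntegrable _ _) ?_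
        intro r hr
        rw [exp_le_exp, div_le_iff₀ hε]
        calc foldPhase κ y₀ s r ≤ κ * √(-s - y₀) * (r - s) := foldPhase_le hκ.le ha.le hr.2
          _ = c * (r - s) * ε := by simp only [c]; field_simp
    _ = (1 - exp (-(c * (s - 0)))) / c := integral_exp_mul_sub hc.ne' 0 s
    _ ≤ 1 / c := by gcongr; linarith [exp_pos (-(c * (s - 0)))]
    _ = ε / (κ * √(-s - y₀)) := one_div_div _ _

lemma le_integral_exp_foldPhase_of_le {m : ℝ} (hκ : 0 < κ) (hε : 0 < ε) (ha : 0 < -s - y₀)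
    (hm : 0 ≤ m) (hms : m ≤ s) :
    ε / (κ * √(-(s - m) - y₀)) * (1 - exp (-(κ * √(-(s - m) - y₀) * m / ε))) ≤
      ∫ r in 0..s, exp (foldPhase κ y₀ s r / ε) := by
  set b := -(s - m) - y₀
  set c := κ * √b / ε
  have hb : 0 < b := by linarith
  have hc : 0 < c := by positivity
  calc ε / (κ * √b) * (1 - exp (-(κ * √b * m / ε)))
      = ∫ r in (s - m)..s, exp (c * (r - s)) := by
        rw [integral_exp_mul_sub hc.ne', sub_sub_cancel]
        simp only [c]
        field_simp
    _ ≤ ∫ r in (s - m)..s, exp (foldPhase κ y₀ s r / ε) := by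
        refine integral_mono_on (by linarith)
          ((by fun_prop : Continuous fun r => exp (c * (r - s))).intervalIntegrable _ _)
          (intervalIntegrable_exp_foldPhase_div _ _) fun r hr => ?_
        rw [exp_le_exp, le_div_iff₀ hε]
        calc c * (r - s) * ε = κ * √b * (r - s) := by simp only [c]; field_simp
          _ ≤ κ * √(-r - y₀) * (r - s) := by
            refine mul_le_mul_of_nonpos_right ?_ (by linarith [hr.2])
            exact mul_le_mul_of_nonneg_left (sqrt_le_sqrt (by linarith [hr.1])) hκ.le
          _ ≤ foldPhase κ y₀ s r := le_foldPhase hκ.le ha.le hr.2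
    _ ≤ ∫ r in 0..s, exp (foldPhase κ y₀ s r / ε) :=
        integral_mono_interval (by linarith) (by linarith) le_rfl
          (.of_forall fun _ => (exp_pos _).le) (intervalIntegrable_exp_foldPhase_div _ _)

lemma le_integral_exp_foldPhase {δ : ℝ} (hκ : 0 < κ) (hε : 0 < ε) (ha : 0 < -s - y₀)
    (hδ : 0 ≤ δ) (hδs : δ * (-s - y₀) ≤ s) :
    (1 - exp (-(κ * δ * ((-s - y₀) * √(-s - y₀) / ε)))) / √(1 + δ) * (ε / (κ * √(-s - y₀))) ≤
      ∫ r in 0..s, exp (foldPhase κ y₀ s r / ε) := by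
  set a := -s - y₀
  have h := le_integral_exp_foldPhase_of_le hκ hε ha (mul_nonneg hδ ha.le) hδs
  rw [show -(s - δ * a) - y₀ = a * (1 + δ) by ring, sqrt_mul ha.le] at h
  have hslope : κ * δ * (a * √a / ε) ≤ κ * (√a * √(1 + δ)) * (δ * a) / ε := by
    rw [show κ * (√a * √(1 + δ)) * (δ * a) / ε = κ * δ * (a * √a / ε) * √(1 + δ) by ring]
    exact le_mul_of_one_le_right (by positivity) (one_le_sqrt.2 (by linarith))
  calc (1 - exp (-(κ * δ * (a * √a / ε)))) / √(1 + δ) * (ε / (κ * √a))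
      = ε / (κ * (√a * √(1 + δ))) * (1 - exp (-(κ * δ * (a * √a / ε)))) := by
        field_simp
    _ ≤ ε / (κ * (√a * √(1 + δ))) * (1 - exp (-(κ * (√a * √(1 + δ)) * (δ * a) / ε))) := by
        gcongr
    _ ≤ _ := h

end foldPhase

lemma tendsto_one_sub_exp_neg_mul_div_sqrt_one_add_inv {κ : ℝ} (hκ : 0 < κ) :
    Tendsto (fun Y : ℝ => (1 - exp (-(κ * Y))) / √(1 + Y⁻¹)) atTop (𝓝 1) := by
  have hnum : Tendsto (fun Y : ℝ => 1 - exp (-(κ * Y))) atTop (𝓝 (1 - 0)) :=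
    tendsto_const_nhds.sub <| tendsto_exp_atBot.comp <| tendsto_neg_atTop_atBot.comp <|
      tendsto_id.const_mul_atTop hκ
  have hden : Tendsto (fun Y : ℝ => √(1 + Y⁻¹)) atTop (𝓝 √(1 + 0)) :=
    (continuous_sqrt.tendsto _).comp (tendsto_const_nhds.add tendsto_inv_atTop_zero)
  have h := hnum.div hden (by norm_num)
  simp only [sub_zero, add_zero, sqrt_one, div_one] at h
  exact h

theorem isEquivalent_integral_exp_foldPhase {ι : Type*} {l : Filter ι} {κ y₀ : ℝ} {s ε : ι → ℝ}
    (hκ : 0 < κ) (hε : ∀ᶠ i in l, 0 < ε i) (ha : ∀ᶠ i in l, 0 < -s i - y₀)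
    (hX : Tendsto (fun i => (-s i - y₀) * √(-s i - y₀) / ε i) l atTop)
    (hs : ∃ c > 0, ∀ᶠ i in l, c * (-s i - y₀) ≤ s i) :
    (fun i => ∫ r in 0..s i, exp (foldPhase κ y₀ (s i) r / ε i)) ~[l]
      fun i => ε i / (κ * √(-s i - y₀)) := by
  obtain ⟨c, hc, hcs⟩ := hs
  have hg : ∀ᶠ i in l, 0 < ε i / (κ * √(-s i - y₀)) := by
    filter_upwards [hε, ha] with i hεi hai
    positivity
  rw [isEquivalent_iff_tendsto_one (hg.mono fun _ h => h.ne')]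
  have hY : Tendsto (fun i => √((-s i - y₀) * √(-s i - y₀) / ε i)) l atTop :=
    tendsto_sqrt_atTop.comp hX
  have hδ := (tendsto_inv_atTop_zero.comp hY).eventually (ge_mem_nhds hc)
  refine tendsto_of_tendsto_of_tendsto_of_le_of_le'
    ((tendsto_one_sub_exp_neg_mul_div_sqrt_one_add_inv hκ).comp hY) tendsto_const_nhds ?_ ?_
  · filter_upwards [hε, ha, hcs, hg, hδ, hY.eventually_gt_atTop 0] with i hεi hai hci hgi hδi hYi
    set X := (-s i - y₀) * √(-s i - y₀) / ε i
    have hδX : (√X)⁻¹ * X = √X := by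
      rw [inv_mul_eq_div, div_eq_iff hYi.ne', mul_self_sqrt (by positivity)]
    have h := le_integral_exp_foldPhase hκ hεi hai (inv_nonneg.2 hYi.le)
      ((mul_le_mul_of_nonneg_right hδi hai.le).trans hci)
    rw [mul_assoc, hδX] at h
    rwa [Function.comp_apply, Pi.div_apply, le_div_iff₀ hgi]
  · filter_upwards [hε, ha, hcs, hg] with i hεi hai hci hgi
    rw [Pi.div_apply, div_le_one hgi]
    exact integral_exp_foldPhase_le hκ hεi hai ((mul_pos hc hai).le.trans hci)

lemma sqrt_mul_rpow_two_mul {C ε : ℝ} (α : ℝ) (hC : 0 ≤ C) (hε : 0 ≤ ε) :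
    √(C * ε ^ (2 * α)) = √C * ε ^ α := by
  rw [sqrt_mul hC, mul_comm 2 α, rpow_mul hε, rpow_two, sqrt_sq (rpow_nonneg hε α)]

lemma tendsto_mul_sqrt_div_nhdsGT_zero {C α : ℝ} (hC : 0 < C) (hα : α < 1 / 3) :
    Tendsto (fun ε => C * ε ^ (2 * α) * √(C * ε ^ (2 * α)) / ε) (𝓝[>] 0) atTop := by
  have h := (tendsto_rpow_neg_nhdsGT_zero (by linarith : 3 * α - 1 < 0)).const_mul_atTop
    (by positivity : 0 < C * √C)
  refine h.congr' (eventually_mem_nhdsWithin.mono fun ε (hε : 0 < ε) => ?_)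
  dsimp only
  rw [sqrt_mul_rpow_two_mul α hC.le hε.le, rpow_sub hε, rpow_one,
    show 3 * α = 2 * α + α by ring, rpow_add hε]
  ring

lemma div_mul_sqrt_mul_rpow_two_mul {κ C ε : ℝ} (α : ℝ) (hC : 0 ≤ C) (hε : 0 < ε) :
    ε / (κ * √(C * ε ^ (2 * α))) = (κ * √C)⁻¹ * ε ^ (1 - α) := by
  rw [sqrt_mul_rpow_two_mul α hC hε.le, rpow_sub hε, rpow_one]
  field_simp

lemma exists_pos_eventually_le_of_antitoneOn {f : ℝ → ℝ} (hf : AntitoneOn f (Set.Ioi 0))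
    (hpos : ∀ᶠ x in 𝓝[>] 0, 0 < f x) : ∃ c > 0, ∀ᶠ x in 𝓝[>] 0, c ≤ f x := by
  obtain ⟨x₀, hfx₀, hx₀⟩ := (hpos.and self_mem_nhdsWithin).exists
  refine ⟨f x₀, hfx₀, ?_⟩
  filter_upwards [Ioo_mem_nhdsGT hx₀] with x hx
  exact hf hx.1 hx₀ hx.2.le

lemma exists_pos_eventually_mul_neg_sub_le {y₀ : ℝ} {s : ℝ → ℝ} (hy₀ : y₀ < 0)
    (hs : AntitoneOn s (Set.Ioi 0)) (hpos : ∀ᶠ ε in 𝓝[>] 0, 0 < s ε) :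
    ∃ c > 0, ∀ᶠ ε in 𝓝[>] 0, c * (-s ε - y₀) ≤ s ε := by
  obtain ⟨c₀, hc₀, hc₀s⟩ := exists_pos_eventually_le_of_antitoneOn hs hpos
  have hc : 0 < c₀ / -y₀ := div_pos hc₀ (neg_pos.2 hy₀)
  refine ⟨c₀ / -y₀, hc, ?_⟩
  filter_upwards [hc₀s, hpos] with ε hc₀ε hsε
  calc c₀ / -y₀ * (-s ε - y₀) ≤ c₀ / -y₀ * -y₀ := by gcongr; linarith
    _ ≤ s ε := by rwa [div_mul_cancel₀ _ (by linarith)]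

/-- Endpoint Laplace asymptotics near a fold. Let `y₀ < 0`, `κ > 0` and let the endpoint
`s(ε) = -y₀ - Cε^{2α}` (so that `-s(ε) - y₀ = Cε^{2α}`) with `C > 0`, `0 ≤ α < 1/3`,
and `s(ε) > 0` for small `ε > 0`.  With
`φ_ε(r) = (2κ/3)[(-s(ε)-y₀)^{3/2} - (-r-y₀)^{3/2}]` one has `φ_ε'(r) > 0` on `[0, s(ε)]`,
`φ_ε(s(ε)) = 0`, and `∫₀^{s(ε)} e^{φ_ε(r)/ε} dr ~ ε/(κ√(-s(ε)-y₀)) = Θ(ε^{1-α})`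
as `ε → 0⁺`. -/
theorem fold_laplace_asymptotics (y₀ κ C α : ℝ)
    (hy₀ : y₀ < 0) (hκ : 0 < κ) (hC : 0 < C) (hα₀ : 0 ≤ α) (hα : α < 1 / 3)
    (sfun : ℝ → ℝ) (hs : ∀ ε, sfun ε = -y₀ - C * ε ^ (2 * α))
    (hspos : ∀ᶠ ε in nhdsWithin 0 (Set.Ioi 0), 0 < sfun ε)
    (φ : ℝ → ℝ → ℝ)
    (hφ : ∀ ε r, φ ε r = (2 * κ / 3) *
      ((-sfun ε - y₀) ^ ((3 : ℝ) / 2) - (-r - y₀) ^ ((3 : ℝ) / 2))) :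
    (∀ᶠ ε in nhdsWithin 0 (Set.Ioi 0),
      φ ε (sfun ε) = 0 ∧
      ∀ r ∈ Set.Icc 0 (sfun ε), 0 < deriv (φ ε) r) ∧
    (fun ε => ∫ r in (0 : ℝ)..(sfun ε), Real.exp (φ ε r / ε))
      ~[nhdsWithin 0 (Set.Ioi 0)]
      (fun ε => ε / (κ * Real.sqrt (-sfun ε - y₀))) ∧
    (∃ c₁ c₂ : ℝ, 0 < c₁ ∧ 0 < c₂ ∧
      ∀ᶠ ε in nhdsWithin 0 (Set.Ioi 0),
        c₁ * ε ^ (1 - α) ≤ (∫ r in (0 : ℝ)..(sfun ε), Real.exp (φ ε r / ε)) ∧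
        (∫ r in (0 : ℝ)..(sfun ε), Real.exp (φ ε r / ε)) ≤ c₂ * ε ^ (1 - α)) := by
  obtain rfl : φ = fun ε => foldPhase κ y₀ (sfun ε) := funext₂ hφ
  have ha : ∀ ε, -sfun ε - y₀ = C * ε ^ (2 * α) := fun ε => by rw [hs]; ring
  have hε : ∀ᶠ ε in 𝓝[>] (0 : ℝ), 0 < ε := self_mem_nhdsWithin
  have hapos : ∀ᶠ ε in 𝓝[>] (0 : ℝ), 0 < -sfun ε - y₀ :=
    hε.mono fun ε hε => by rw [ha]; positivity
  have hanti : AntitoneOn sfun (Set.Ioi 0) := fun x hx y _ hxy => by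
    simp only [hs]
    gcongr
    exact hx.le
  have hequiv := isEquivalent_integral_exp_foldPhase hκ hε hapos
    (by simpa only [ha] using tendsto_mul_sqrt_div_nhdsGT_zero hC hα)
    (exists_pos_eventually_mul_neg_sub_le hy₀ hanti hspos)
  have hg : ∀ᶠ ε in 𝓝[>] (0 : ℝ), ε / (κ * √(-sfun ε - y₀)) = (κ * √C)⁻¹ * ε ^ (1 - α) :=
    hε.mono fun ε hε => by rw [ha, div_mul_sqrt_mul_rpow_two_mul α hC.le hε]
  have hhalf := hequiv.eventually_mul_le (hε.mono fun ε hε => by positivity) one_half_lt_one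
  refine ⟨?_, hequiv, (κ * √C)⁻¹ / 2, (κ * √C)⁻¹, by positivity, by positivity, ?_⟩
  · filter_upwards [hapos] with ε haε
    exact ⟨foldPhase_self, fun r hr => deriv_foldPhase_pos hκ (by linarith [hr.2])⟩
  · filter_upwards [hε, hapos, hspos, hg, hhalf] with ε hε haε hsε hgε hhalfε
    rw [hgε] at hhalfε
    exact ⟨by linarith, hgε ▸ integral_exp_foldPhase_le hκ hε haε hsε.le⟩
end
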